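/- Let A be a left brace such that A³ = ⟨0⟩, and suppose A is generated as a brace by an element a. Put a₁ = a, a₂ = a₁ ⋆ a, a₃ = a₂ ⋆ a. Then every element of A has the form k₁·a₁ + k₂·a₂ + k₃·a₃ with integers k₁, k₂, k₃. Moreover, if x = k₁·a₁ + k₂·a₂ + k₃·a₃ and y = t₁·a₁ + t₂·a₂ + t₃·a₃ with integers k₁, k₂, k₃, t₁, t₂, t₃, then x ⋆ y = t₁k₁·a₂ + ((2k₂ + k₁ − k₁²)/2)·t₁·a₃ and x·y = (k₁ + t₁)·a₁ + (k₂ + t₂ + t₁k₁)·a₂ + (k₃ + t₃ + ((2k₂ + k₁ − k₁²)/2)·t₁)·a₃, where (k₁ − k₁²)/2 is an integer. -/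

import Mathlib

/-- A left brace: `(A, +)` is an abelian group, `(A, *)` is a group, and
`a * (b + c) = a * b + a * c - a` for all `a b c`. -/
class LeftBrace (A : Type*) extends AddCommGroup A, Group A where
  mul_add_eq : ∀ a b c : A, a * (b + c) = a * b + a * c - a

namespace LeftBrace

variable {A : Type*} [LeftBrace A]

/-- The star operation of a left brace: `a ⋆ b = a * b - a - b`. -/
def star (a b : A) : A := a * b - a - b

/-- `K ⋆ L`: the subgroup of the additive group of `A` generated by all
`x ⋆ y` with `x ∈ K`, `y ∈ L`. -/
def setStar (K L : Set A) : AddSubgroup A :=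
  AddSubgroup.closure (Set.image2 star K L)

/-- A subbrace of `A`: a subset that is simultaneously a subgroup of the
additive group of `A` and a subgroup of the multiplicative group of `A`. -/
def IsSubbrace (S : Set A) : Prop :=
  (0 : A) ∈ S ∧ (∀ x ∈ S, ∀ y ∈ S, x + y ∈ S) ∧ (∀ x ∈ S, -x ∈ S) ∧
    (1 : A) ∈ S ∧ (∀ x ∈ S, ∀ y ∈ S, x * y ∈ S) ∧ (∀ x ∈ S, x⁻¹ ∈ S)

/-- A left ideal of `A`: a subbrace `S` with `a ⋆ b ∈ S` for all `a ∈ A`, `b ∈ S`. -/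
def IsLeftIdeal (S : Set A) : Prop :=
  IsSubbrace S ∧ ∀ a : A, ∀ b ∈ S, star a b ∈ S

/-- An ideal of `A`: a subbrace `S` with `a ⋆ z ∈ S` and `z ⋆ a ∈ S`
for all `a ∈ A`, `z ∈ S`. -/
def IsIdeal (S : Set A) : Prop :=
  IsSubbrace S ∧ ∀ a : A, ∀ z ∈ S, star a z ∈ S ∧ star z a ∈ S

/-- The left series of the brace `A`, with the indexing shifted by one:
`leftSeriesN A 0 = A¹ = A` and `leftSeriesN A n = Aⁿ⁺¹ = A ⋆ Aⁿ`.
In particular `leftSeriesN A 1 = A²` and `leftSeriesN A 2 = A³`. -/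
def leftSeriesN (A : Type*) [LeftBrace A] : ℕ → AddSubgroup A
  | 0 => ⊤
  | n + 1 => setStar Set.univ ((leftSeriesN A n : AddSubgroup A) : Set A)

/-- The right series of the brace `A`, with the indexing shifted by one:
`rightSeriesN A 0 = A⁽¹⁾ = A` and `rightSeriesN A n = A⁽ⁿ⁺¹⁾ = A⁽ⁿ⁾ ⋆ A`.
In particular `rightSeriesN A 2 = A⁽³⁾` and `rightSeriesN A 3 = A⁽⁴⁾`. -/
def rightSeriesN (A : Type*) [LeftBrace A] : ℕ → AddSubgroup A
  | 0 => ⊤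
  | n + 1 => setStar ((rightSeriesN A n : AddSubgroup A) : Set A) Set.univ

end LeftBrace

/-!
Write `b = a ⋆ a` and `c = b ⋆ a`. The condition `A³ = 0` says `u ⋆ (v ⋆ w) = 0`; with the brace
identity `(x y) ⋆ z = x ⋆ (y ⋆ z) + x ⋆ z + y ⋆ z` it makes `x ↦ x ⋆ z` a homomorphism from the
multiplicative group to the additive one, and yields `(u + v) ⋆ z = u ⋆ z + v ⋆ z - (u ⋆ v) ⋆ z`.
Since the left side is symmetric in `u, v`, so is `(u ⋆ v) ⋆ z`, whence `((u ⋆ v) ⋆ w) ⋆ z = 0`;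
in particular `c ⋆ a = 0`. Induction on `n` then gives `(n a) ⋆ z = n (a ⋆ z) - C(n, 2) (b ⋆ z)`,
and right distributivity of `⋆` gives the multiplication table on `ℤ a + ℤ b + ℤ c`. That set is
therefore a subbrace containing `a`, hence all of `A`.
-/

namespace LeftBrace

variable {A : Type*} [LeftBrace A]

theorem one_eq_zero : (1 : A) = 0 := by
  simpa using mul_add_eq (1 : A) 0 0

theorem mul_eq_add_add_star (x y : A) : x * y = x + y + star x y := by
  rw [star]; abel

theorem mul_eq_add_of_star_eq_zero {x y : A} (h : star x y = 0) : x * y = x + y := by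
  rw [mul_eq_add_add_star, h, add_zero]

theorem mul_sub_eq (x u v : A) : x * (u - v) = x * u - x * v + x := by
  have h := mul_add_eq x (u - v) v
  rw [sub_add_cancel] at h
  rw [h]; abel

theorem star_zero_left (z : A) : star 0 z = 0 := by
  rw [star, ← one_eq_zero, one_mul, one_eq_zero]; abel

theorem star_add_right (x y z : A) : star x (y + z) = star x y + star x z := by
  simp only [star, mul_add_eq]; abel

def starAddHom (x : A) : A →+ A := AddMonoidHom.mk' (star x) (star_add_right x)

theorem star_neg_right (x y : A) : star x (-y) = -star x y :=
  map_neg (starAddHom x) y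

theorem star_zsmul_right (x : A) (n : ℤ) (y : A) : star x (n • y) = n • star x y :=
  map_zsmul (starAddHom x) n y

theorem star_mul_left (x y z : A) :
    star (x * y) z = star x (star y z) + star x z + star y z := by
  simp only [star, mul_sub_eq, mul_assoc]; abel

theorem star_star_eq_zero_of_leftSeriesN_two_eq_bot (h3 : leftSeriesN A 2 = ⊥) (u v w : A) :
    star u (star v w) = 0 := by
  have hvw : star v w ∈ leftSeriesN A 1 :=
    AddSubgroup.subset_closure (Set.mem_image2_of_mem (Set.mem_univ v) (Set.mem_univ w))
  have huvw : star u (star v w) ∈ leftSeriesN A 2 :=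
    AddSubgroup.subset_closure (Set.mem_image2_of_mem (Set.mem_univ u) hvw)
  rwa [h3, AddSubgroup.mem_bot] at huvw

def linComb (a : A) (k₁ k₂ k₃ : ℤ) : A := k₁ • a + k₂ • star a a + k₃ • star (star a a) a

section CubeZero

variable (hA : ∀ u v w : A, star u (star v w) = 0)
include hA

theorem star_mul_left_of_cube_zero (x y z : A) : star (x * y) z = star x z + star y z := by
  rw [star_mul_left, hA, zero_add]

theorem star_add_left_of_star_eq_zero {x y : A} (h : star x y = 0) (z : A) :
    star (x + y) z = star x z + star y z := by
  rw [← mul_eq_add_of_star_eq_zero h, star_mul_left_of_cube_zero hA]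

theorem star_neg_star_left (u v z : A) : star (-star u v) z = -star (star u v) z := by
  have h := star_add_left_of_star_eq_zero hA (x := star u v) (y := -star u v)
    (by rw [star_neg_right, hA, neg_zero]) z
  rw [add_neg_cancel, star_zero_left] at h
  exact (neg_eq_of_add_eq_zero_right h.symm).symm

theorem star_add_left (u v z : A) :
    star (u + v) z = star u z + star v z - star (star u v) z := by
  -- `u + v = u (v - u ⋆ v)` and `v - u ⋆ v = v (-(u ⋆ v))`, both because `A³ = 0`
  have hu : u * (v - star u v) = u + v := by
    rw [mul_eq_add_add_star, sub_eq_add_neg, star_add_right, star_neg_right, hA]; abel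
  have hv : star v (-star u v) = 0 := by rw [star_neg_right, hA, neg_zero]
  rw [← hu, star_mul_left_of_cube_zero hA, sub_eq_add_neg v,
    star_add_left_of_star_eq_zero hA hv, star_neg_star_left hA]
  abel

theorem star_star_left_comm (u v z : A) : star (star u v) z = star (star v u) z := by
  have h := star_add_left hA u v z
  rw [add_comm u v, star_add_left hA v u z] at h
  simpa [add_comm (star v z)] using h.symm

theorem star_star_star_left (u v w z : A) : star (star (star u v) w) z = 0 := by
  rw [star_star_left_comm hA, hA, star_zero_left]

theorem star_neg_left (x z : A) : star (-x) z = -star x z - star (star x x) z := by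
  have h := star_add_left hA x (-x) z
  rw [add_neg_cancel, star_zero_left, star_neg_right, star_neg_star_left hA] at h
  symm
  rw [← sub_eq_zero, ← neg_eq_zero, h]
  abel

theorem star_zsmul_left_of_forall_star_eq_zero {y : A} (hy : ∀ x, star x y = 0)
    (n : ℤ) (z : A) : star (n • y) z = n • star y z := by
  let T : AddSubgroup A := ⨅ x, (starAddHom x).ker
  let f : T →+ A := AddMonoidHom.mk' (fun t => star t z) fun s t =>
    star_add_left_of_star_eq_zero hA (AddSubgroup.mem_iInf.mp t.2 s) z
  exact map_zsmul f n ⟨y, AddSubgroup.mem_iInf.mpr hy⟩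

theorem star_zsmul_star_add_zsmul_star_star_left (p q : ℤ) (u v w z : A) :
    star (p • star u v + q • star (star u v) w) z = p • star (star u v) z := by
  have h : star (p • star u v) (q • star (star u v) w) = 0 := by
    rw [star_zsmul_right, hA, smul_zero]
  rw [star_add_left_of_star_eq_zero hA h, star_zsmul_left_of_forall_star_eq_zero hA (hA · u v),
    star_zsmul_left_of_forall_star_eq_zero hA (hA · _ w), star_star_star_left hA, smul_zero,
    add_zero]

theorem star_zsmul_left (x : A) (n : ℤ) :
    ∃ m : ℤ, 2 * m = n - n ^ 2 ∧
      ∀ z, star (n • x) z = n • star x z + m • star (star x x) z := by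
  induction n using Int.induction_on with
  | zero => exact ⟨0, by ring, fun z => by simp [star_zero_left]⟩
  | succ n ih =>
    obtain ⟨m, hm, h⟩ := ih
    refine ⟨m - n, by linear_combination hm, fun z => ?_⟩
    rw [add_zsmul, one_zsmul, star_add_left hA, h, h x,
      star_zsmul_star_add_zsmul_star_star_left hA]
    module
  | pred n ih =>
    obtain ⟨m, hm, h⟩ := ih
    refine ⟨m - 1 - n, by linear_combination hm, fun z => ?_⟩
    have hx : star ((-n : ℤ) • x) (-x) = (n : ℤ) • star x x + (-m) • star (star x x) x := by
      rw [star_neg_right, h x, neg_add, ← neg_zsmul, ← neg_zsmul, neg_neg]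
    rw [sub_zsmul, one_zsmul, sub_eq_add_neg, star_add_left hA, h, star_neg_left hA, hx,
      star_zsmul_star_add_zsmul_star_star_left hA]
    module

variable (a : A)

theorem star_linComb_self (k₁ k₂ k₃ : ℤ) :
    star (linComb a k₁ k₂ k₃) a =
      k₁ • star a a + ((2 * k₂ + k₁ - k₁ ^ 2) / 2) • star (star a a) a := by
  obtain ⟨m, hm, h⟩ := star_zsmul_left hA a k₁
  have hdiv : (2 * k₂ + k₁ - k₁ ^ 2) / 2 = k₂ + m := by
    rw [show 2 * k₂ + k₁ - k₁ ^ 2 = 2 * (k₂ + m) by linear_combination -hm,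
      Int.mul_ediv_cancel_left _ two_ne_zero]
  have h0 : star (k₁ • a) (k₂ • star a a + k₃ • star (star a a) a) = 0 := by
    rw [star_add_right, star_zsmul_right, star_zsmul_right, hA, hA, smul_zero, smul_zero,
      add_zero]
  rw [linComb, add_assoc, star_add_left_of_star_eq_zero hA h0, h,
    star_zsmul_star_add_zsmul_star_star_left hA, hdiv]
  module

theorem star_linComb (k₁ k₂ k₃ t₁ t₂ t₃ : ℤ) :
    star (linComb a k₁ k₂ k₃) (linComb a t₁ t₂ t₃) =
      (t₁ * k₁) • star a a + (((2 * k₂ + k₁ - k₁ ^ 2) / 2) * t₁) • star (star a a) a := by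
  rw [linComb.eq_1 a t₁, star_add_right, star_add_right, star_zsmul_right, star_zsmul_right,
    star_zsmul_right, hA, hA, star_linComb_self hA]
  module

theorem linComb_mul_linComb (k₁ k₂ k₃ t₁ t₂ t₃ : ℤ) :
    linComb a k₁ k₂ k₃ * linComb a t₁ t₂ t₃ =
      linComb a (k₁ + t₁) (k₂ + t₂ + t₁ * k₁) (k₃ + t₃ + ((2 * k₂ + k₁ - k₁ ^ 2) / 2) * t₁) := by
  rw [mul_eq_add_add_star, star_linComb hA]
  simp only [linComb]
  module

theorem isSubbrace_linComb : IsSubbrace {x | ∃ k₁ k₂ k₃ : ℤ, x = linComb a k₁ k₂ k₃} := by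
  have h0 : (0 : A) ∈ {x | ∃ k₁ k₂ k₃ : ℤ, x = linComb a k₁ k₂ k₃} := ⟨0, 0, 0, by simp [linComb]⟩
  refine ⟨h0, ?_, ?_, one_eq_zero (A := A) ▸ h0, ?_, ?_⟩
  · rintro _ ⟨k₁, k₂, k₃, rfl⟩ _ ⟨t₁, t₂, t₃, rfl⟩
    exact ⟨k₁ + t₁, k₂ + t₂, k₃ + t₃, by simp only [linComb]; module⟩
  · rintro _ ⟨k₁, k₂, k₃, rfl⟩
    exact ⟨-k₁, -k₂, -k₃, by simp only [linComb]; module⟩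
  · rintro _ ⟨k₁, k₂, k₃, rfl⟩ _ ⟨t₁, t₂, t₃, rfl⟩
    exact ⟨_, _, _, linComb_mul_linComb hA a k₁ k₂ k₃ t₁ t₂ t₃⟩
  · rintro _ ⟨k₁, k₂, k₃, rfl⟩
    refine ⟨-k₁, k₁ * k₁ - k₂, (2 * k₂ + k₁ - k₁ ^ 2) / 2 * k₁ - k₃,
      inv_eq_of_mul_eq_one_right ?_⟩
    rw [linComb_mul_linComb hA, one_eq_zero, show k₁ + -k₁ = 0 by ring,
      show k₂ + (k₁ * k₁ - k₂) + -k₁ * k₁ = 0 by ring]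
    generalize (2 * k₂ + k₁ - k₁ ^ 2) / 2 = M
    rw [show k₃ + (M * k₁ - k₃) + M * -k₁ = 0 by ring]
    simp [linComb]

end CubeZero

end LeftBrace

open LeftBrace

/-- **Theorem A, first part.** Let `A` be a left brace with
`A³ = ⟨0⟩` (here `A³ = A ⋆ (A ⋆ A) = leftSeriesN A 2`), generated as a brace
by the element `a` (i.e. the only subbrace containing `a` is `A` itself).
Put `a₁ = a`, `a₂ = a₁ ⋆ a`, `a₃ = a₂ ⋆ a`.  Then every element of `A` has
the form `k₁·a₁ + k₂·a₂ + k₃·a₃` with integers `k₁, k₂, k₃`, and for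
`x = k₁·a₁ + k₂·a₂ + k₃·a₃`, `y = t₁·a₁ + t₂·a₂ + t₃·a₃` one has
`x ⋆ y = t₁k₁·a₂ + ((2k₂ + k₁ − k₁²)/2)·t₁·a₃` and
`x·y = (k₁+t₁)·a₁ + (k₂+t₂+t₁k₁)·a₂ + (k₃+t₃+((2k₂+k₁−k₁²)/2)·t₁)·a₃`
(note that `2k₂ + k₁ − k₁²` is even, so the integer division by `2` is exact). -/
theorem one_generator_structure {A : Type*} [LeftBrace A] (a : A)
    (h3 : leftSeriesN A 2 = ⊥)
    (hgen : ∀ S : Set A, IsSubbrace S → a ∈ S → S = Set.univ) :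
    (∀ x : A, ∃ k₁ k₂ k₃ : ℤ,
        x = k₁ • a + k₂ • star a a + k₃ • star (star a a) a) ∧
    (∀ k₁ k₂ k₃ t₁ t₂ t₃ : ℤ,
        star (k₁ • a + k₂ • star a a + k₃ • star (star a a) a)
            (t₁ • a + t₂ • star a a + t₃ • star (star a a) a) =
          (t₁ * k₁) • star a a +
            (((2 * k₂ + k₁ - k₁ ^ 2) / 2) * t₁) • star (star a a) a ∧
        (k₁ • a + k₂ • star a a + k₃ • star (star a a) a) *
            (t₁ • a + t₂ • star a a + t₃ • star (star a a) a) =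
          (k₁ + t₁) • a + (k₂ + t₂ + t₁ * k₁) • star a a +
            (k₃ + t₃ + ((2 * k₂ + k₁ - k₁ ^ 2) / 2) * t₁) • star (star a a) a) := by
  have hA := star_star_eq_zero_of_leftSeriesN_two_eq_bot h3
  refine ⟨fun x => ?_, fun k₁ k₂ k₃ t₁ t₂ t₃ =>
    ⟨star_linComb hA a k₁ k₂ k₃ t₁ t₂ t₃, linComb_mul_linComb hA a k₁ k₂ k₃ t₁ t₂ t₃⟩⟩
  have hS := hgen _ (isSubbrace_linComb hA a) ⟨1, 0, 0, by simp [linComb]⟩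
  exact Set.eq_univ_iff_forall.mp hS x
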